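/- arXiv:2604.13825 — 5 statements merged into one kernel-verified Lean document; each statement's English description precedes it below -/
import Mathlib

section
/- Let f : 𝔻 → 𝔻 be analytic, not identically 0, and let σ be a finite positive Borel measure on ∂𝔻 such that log|f(z)|^{-2} = Σ_{w∈𝔻, f(w)=0} m_w · log|(z−w)/(1−w̄z)|^{-2} + 2∫_{∂𝔻}(1−|z|²)/|ξ−z|² dσ(ξ) for every z ∈ 𝔻 with f(z) ≠ 0 (m_w the order of the zero of f at w). Set μ = Σ_{w : f(w)=0} m_w(1−|w|²)δ_w + 2σ on the closed disc 𝔻̄ and P[μ](z) = ∫_{𝔻̄} (1−|z|²)/|1−w̄z|² dμ(w). Then log|f(z)|^{-2} ≥ P[μ](z) for every z ∈ 𝔻 with f(z) ≠ 0. -/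
open MeasureTheory Complex Set Metric Filter
open scoped ENNReal NNReal Topology

noncomputable section

/-- The hyperbolic derivative of an analytic self-map of the unit disc. -/
def hypDeriv (f : ℂ → ℂ) (z : ℂ) : ℝ :=
  (1 - ‖z‖ ^ 2) * ‖deriv f z‖ / (1 - ‖f z‖ ^ 2)

/-- A self-map of the disc is contractive if its hyperbolic derivative is
uniformly bounded by a constant smaller than one. -/
def ContractiveMap (f : ℂ → ℂ) : Prop :=
  ∃ D < (1 : ℝ), ∀ z ∈ ball (0 : ℂ) 1, hypDeriv f z ≤ D

/-- The closed arc of the unit circle with center `ξ` and normalized length `t`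
(arclength `2 π t`). -/
def bdryArc (ξ : ℂ) (t : ℝ) : Set ℂ :=
  {η : ℂ | ∃ θ : ℝ, |θ| ≤ Real.pi * t ∧ η = Complex.exp (θ * Complex.I) * ξ}

/-- The Carleson box over the arc with center `ξ` and normalized length `t`. -/
def carlesonBox (ξ : ℂ) (t : ℝ) : Set ℂ :=
  {z : ℂ | z ∈ ball (0 : ℂ) 1 ∧ 1 - ‖z‖ ≤ t ∧ z ≠ 0 ∧ (‖z‖ : ℂ)⁻¹ * z ∈ bdryArc ξ t}

/-- Normalized arclength measure on the unit circle (total mass 1). -/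
def circleM : Measure ℂ :=
  Measure.map (fun θ : ℝ => Complex.exp (2 * Real.pi * θ * Complex.I))
    (volume.restrict (Ioc (0 : ℝ) 1))

/-- Normalized area measure on the unit disc (total mass 1). -/
def discM : Measure ℂ :=
  (ENNReal.ofReal Real.pi)⁻¹ • volume.restrict (ball (0 : ℂ) 1)

/-- Poisson integral of a measure on the unit circle. -/
def poissonInt (σ : Measure ℂ) (z : ℂ) : ℝ :=
  ∫ ξ, (1 - ‖z‖ ^ 2) / ‖ξ - z‖ ^ 2 ∂σ

/-- Hyperbolic distance on the unit disc. -/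
def hypDist (z w : ℂ) : ℝ :=
  (1 / 2) * Real.log ((1 + ‖(z - w) / (1 - (starRingEnd ℂ) w * z)‖) /
    (1 - ‖(z - w) / (1 - (starRingEnd ℂ) w * z)‖))

/-- `u` is harmonic on the unit disc: twice continuously differentiable with
vanishing Laplacian. -/
def HarmonicOnDisc (u : ℂ → ℝ) : Prop :=
  ContDiffOn ℝ 2 u (ball (0 : ℂ) 1) ∧
    ∀ z ∈ ball (0 : ℂ) 1,
      fderiv ℝ (fun w => fderiv ℝ u w 1) z 1 +
        fderiv ℝ (fun w => fderiv ℝ u w Complex.I) z Complex.I = 0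

/-- An inner function: a bounded analytic self-map of the disc whose radial limits
have modulus one almost everywhere on the circle. -/
def InnerFunction (f : ℂ → ℂ) : Prop :=
  DifferentiableOn ℂ f (ball (0 : ℂ) 1) ∧
    (∀ z ∈ ball (0 : ℂ) 1, f z ∈ ball (0 : ℂ) 1) ∧
    ∀ᵐ ξ ∂circleM, ∃ L : ℂ, ‖L‖ = 1 ∧
      Tendsto (fun r : ℝ => f ((r : ℂ) * ξ)) (nhdsWithin 1 (Iio 1)) (nhds L)

/-- The set of boundary points whose radial limit under `f` exists and lies in `E`. -/
def radialPreimage (f : ℂ → ℂ) (E : Set ℂ) : Set ℂ :=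
  {ξ : ℂ | ‖ξ‖ = 1 ∧ ∃ L ∈ E,
    Tendsto (fun r : ℝ => f ((r : ℂ) * ξ)) (nhdsWithin 1 (Iio 1)) (nhds L)}

/-- Harmonic measure of `E ⊆ ∂𝔻` from the point `z ∈ 𝔻`. -/
def harmonicMeas (z : ℂ) (E : Set ℂ) : ℝ :=
  ∫ ξ in E, (1 - ‖z‖ ^ 2) / ‖ξ - z‖ ^ 2 ∂circleM

/-- Poisson integral of a positive measure on the closed unit disc. -/
def poissonMu (μ : Measure ℂ) (z : ℂ) : ℝ≥0∞ :=
  ∫⁻ w, ENNReal.ofReal ((1 - ‖z‖ ^ 2) / ‖1 - (starRingEnd ℂ) w * z‖ ^ 2) ∂μ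

/-- The measure `Σ_{f(w)=0} m_w (1-|w|²) δ_w` over the zeros of `f` in the disc,
with multiplicities given by `ord`. -/
def zeroMassMeasure (f : ℂ → ℂ) (ord : ℂ → ℕ) : Measure ℂ :=
  Measure.sum (fun w : {w : ℂ // w ∈ ball (0 : ℂ) 1 ∧ f w = 0} =>
    ((ord (w : ℂ) : ℝ≥0∞) * ENNReal.ofReal (1 - ‖(w : ℂ)‖ ^ 2)) • Measure.dirac (w : ℂ))

/-- The dyadic subarc of generation `p.1` and index `p.2` of the (half-open) arc
with center `ξ` and normalized length `t`, obtained by repeated bisection. -/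
def dyadicArc (ξ : ℂ) (t : ℝ) (p : ℕ × ℕ) : Set ℂ :=
  {η : ℂ | ∃ θ : ℝ,
    -(Real.pi * t) + 2 * Real.pi * t * p.2 / 2 ^ p.1 ≤ θ ∧
    θ < -(Real.pi * t) + 2 * Real.pi * t * (p.2 + 1) / 2 ^ p.1 ∧
    η = Complex.exp (θ * Complex.I) * ξ}

/-! The estimate is termwise. For a zero `w`, the Blaschke factor `b` of `w` satisfies
`1 - |b(z)|² = (1 - |w|²)(1 - |z|²)/|1 - w̄z|²`, and `1 - r² ≤ log r⁻²` for `r > 0` turns this into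
`(1 - |w|²) P_w(z) ≤ log |b(z)|⁻²`, where `P_w(z) = (1 - |z|²)/|1 - w̄z|²`. For `ξ` on the circle
`|1 - ξ̄z| = |ξ - z|`, so the kernel of `P[μ]` restricted to `σ` is the Poisson kernel and that part of
the inequality is an equality. -/

lemma norm_one_sub_conj_mul_sq_sub_norm_sub_sq (w z : ℂ) :
    ‖1 - (starRingEnd ℂ) w * z‖ ^ 2 - ‖z - w‖ ^ 2 = (1 - ‖w‖ ^ 2) * (1 - ‖z‖ ^ 2) := by
  simp only [Complex.sq_norm, Complex.normSq_apply, Complex.sub_re, Complex.sub_im,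
    Complex.mul_re, Complex.mul_im, Complex.one_re, Complex.one_im, Complex.conj_re,
    Complex.conj_im]
  ring

lemma one_sub_norm_blaschke_sq {w z : ℂ} (hd : 1 - (starRingEnd ℂ) w * z ≠ 0) :
    1 - ‖(z - w) / (1 - (starRingEnd ℂ) w * z)‖ ^ 2 =
      (1 - ‖w‖ ^ 2) * ((1 - ‖z‖ ^ 2) / ‖1 - (starRingEnd ℂ) w * z‖ ^ 2) := by
  have hd2 : ‖1 - (starRingEnd ℂ) w * z‖ ^ 2 ≠ 0 := by positivity
  rw [norm_div, div_pow, ← mul_div_assoc, ← norm_one_sub_conj_mul_sq_sub_norm_sub_sq, sub_div,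
    div_self hd2]

lemma one_sub_sq_le_neg_two_mul_log {r : ℝ} (hr : 0 < r) : 1 - r ^ 2 ≤ -2 * Real.log r := by
  have h := Real.log_le_sub_one_of_pos (pow_pos hr 2)
  rw [Real.log_pow] at h
  push_cast at h
  linarith

lemma mul_poissonKernel_le_neg_two_mul_log_norm_blaschke {w z : ℂ} (hzw : z ≠ w)
    (hd : 1 - (starRingEnd ℂ) w * z ≠ 0) :
    (1 - ‖w‖ ^ 2) * ((1 - ‖z‖ ^ 2) / ‖1 - (starRingEnd ℂ) w * z‖ ^ 2) ≤
      -2 * Real.log ‖(z - w) / (1 - (starRingEnd ℂ) w * z)‖ := by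
  rw [← one_sub_norm_blaschke_sq hd]
  exact one_sub_sq_le_neg_two_mul_log (norm_pos_iff.mpr (div_ne_zero (sub_ne_zero.mpr hzw) hd))

lemma one_sub_norm_sq_nonneg_of_norm_lt_one {z : ℂ} (hz : ‖z‖ < 1) : 0 ≤ 1 - ‖z‖ ^ 2 := by
  nlinarith [norm_nonneg z]

lemma one_sub_conj_mul_ne_zero {w z : ℂ} (hw : ‖w‖ < 1) (hz : ‖z‖ < 1) :
    1 - (starRingEnd ℂ) w * z ≠ 0 := by
  refine sub_ne_zero.mpr fun h => ?_
  have : ‖(starRingEnd ℂ) w * z‖ < 1 := by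
    rw [norm_mul, Complex.norm_conj]
    nlinarith [norm_nonneg w, norm_nonneg z]
  rw [← h, norm_one] at this
  exact lt_irrefl 1 this

lemma neg_two_mul_log_norm_blaschke_nonneg {w z : ℂ} (hw : ‖w‖ < 1) (hz : ‖z‖ < 1) :
    0 ≤ -2 * Real.log ‖(z - w) / (1 - (starRingEnd ℂ) w * z)‖ := by
  rcases eq_or_ne z w with rfl | hzw
  · simp
  have := one_sub_norm_sq_nonneg_of_norm_lt_one hw
  have := one_sub_norm_sq_nonneg_of_norm_lt_one hz
  exact (by positivity : (0 : ℝ) ≤ _).trans (mul_poissonKernel_le_neg_two_mul_log_norm_blaschke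
    hzw (one_sub_conj_mul_ne_zero hw hz))

lemma norm_one_sub_conj_mul_of_norm_eq_one {ξ : ℂ} (hξ : ‖ξ‖ = 1) (z : ℂ) :
    ‖1 - (starRingEnd ℂ) ξ * z‖ = ‖ξ - z‖ := by
  have hξξ : ξ * (starRingEnd ℂ) ξ = 1 := by
    rw [Complex.mul_conj, Complex.normSq_eq_norm_sq, hξ]
    norm_num
  calc ‖1 - (starRingEnd ℂ) ξ * z‖ = ‖ξ * (1 - (starRingEnd ℂ) ξ * z)‖ := by
        rw [norm_mul, hξ, one_mul]
    _ = ‖ξ - z‖ := by rw [mul_sub, mul_one, ← mul_assoc, hξξ, one_mul]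

lemma poissonMu_add (μ ν : Measure ℂ) (z : ℂ) :
    poissonMu (μ + ν) z = poissonMu μ z + poissonMu ν z :=
  lintegral_add_measure _ _ _

lemma poissonMu_smul (c : ℝ≥0∞) (μ : Measure ℂ) (z : ℂ) :
    poissonMu (c • μ) z = c * poissonMu μ z :=
  lintegral_smul_measure _ _

lemma integrable_poissonKernel {σ : Measure ℂ} [IsFiniteMeasure σ]
    (hsupp : σ (sphere (0 : ℂ) 1)ᶜ = 0) {z : ℂ} (hz : ‖z‖ < 1) :
    Integrable (fun ξ : ℂ => (1 - ‖z‖ ^ 2) / ‖ξ - z‖ ^ 2) σ := by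
  have hnum := one_sub_norm_sq_nonneg_of_norm_lt_one hz
  refine Integrable.mono' (integrable_const ((1 - ‖z‖ ^ 2) / (1 - ‖z‖) ^ 2))
    (Measurable.aestronglyMeasurable (by fun_prop)) ?_
  filter_upwards [measure_eq_zero_iff_ae_notMem.mp hsupp] with ξ hξ
  have hξ1 : ‖ξ‖ = 1 := by simpa using hξ
  have hgap : 1 - ‖z‖ ≤ ‖ξ - z‖ := by linarith [norm_sub_norm_le ξ z]
  rw [Real.norm_of_nonneg (by positivity)]
  exact div_le_div_of_nonneg_left hnum (by nlinarith) (by nlinarith)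

lemma poissonMu_eq_ofReal_poissonInt {σ : Measure ℂ} [IsFiniteMeasure σ]
    (hsupp : σ (sphere (0 : ℂ) 1)ᶜ = 0) {z : ℂ} (hz : ‖z‖ < 1) :
    poissonMu σ z = ENNReal.ofReal (poissonInt σ z) := by
  have hnum := one_sub_norm_sq_nonneg_of_norm_lt_one hz
  rw [poissonInt, ofReal_integral_eq_lintegral_ofReal (integrable_poissonKernel hsupp hz)
    (Eventually.of_forall fun ξ => by positivity), poissonMu]
  refine lintegral_congr_ae ?_
  filter_upwards [measure_eq_zero_iff_ae_notMem.mp hsupp] with ξ hξ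
  rw [norm_one_sub_conj_mul_of_norm_eq_one (by simpa using hξ)]

lemma poissonMu_zeroMassMeasure (f : ℂ → ℂ) (ord : ℂ → ℕ) (z : ℂ) :
    poissonMu (zeroMassMeasure f ord) z =
      ∑' w : {w : ℂ // w ∈ ball (0 : ℂ) 1 ∧ f w = 0},
        (ord (w : ℂ) : ℝ≥0∞) * ENNReal.ofReal (1 - ‖(w : ℂ)‖ ^ 2) *
          ENNReal.ofReal ((1 - ‖z‖ ^ 2) / ‖1 - (starRingEnd ℂ) (w : ℂ) * z‖ ^ 2) := by
  rw [poissonMu, zeroMassMeasure, lintegral_sum_measure]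
  refine tsum_congr fun w => ?_
  rw [lintegral_smul_measure, lintegral_dirac, smul_eq_mul]

lemma poissonMu_zeroMassMeasure_le {f : ℂ → ℂ} {ord : ℂ → ℕ} {z : ℂ} (hz : ‖z‖ < 1)
    (hfz : f z ≠ 0)
    (hsum : Summable (fun w : {w : ℂ // w ∈ ball (0 : ℂ) 1 ∧ f w = 0} =>
      (ord (w : ℂ) : ℝ) *
        (-(2 : ℝ) * Real.log ‖(z - (w : ℂ)) / (1 - (starRingEnd ℂ) (w : ℂ) * z)‖))) :
    poissonMu (zeroMassMeasure f ord) z ≤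
      ENNReal.ofReal (∑' w : {w : ℂ // w ∈ ball (0 : ℂ) 1 ∧ f w = 0},
        (ord (w : ℂ) : ℝ) *
          (-(2 : ℝ) * Real.log ‖(z - (w : ℂ)) / (1 - (starRingEnd ℂ) (w : ℂ) * z)‖)) := by
  have hterm (w : {w : ℂ // w ∈ ball (0 : ℂ) 1 ∧ f w = 0}) :
      (ord (w : ℂ) : ℝ) * ((1 - ‖(w : ℂ)‖ ^ 2) *
          ((1 - ‖z‖ ^ 2) / ‖1 - (starRingEnd ℂ) (w : ℂ) * z‖ ^ 2)) ≤
        (ord (w : ℂ) : ℝ) *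
          (-(2 : ℝ) * Real.log ‖(z - (w : ℂ)) / (1 - (starRingEnd ℂ) (w : ℂ) * z)‖) := by
    have hw : ‖(w : ℂ)‖ < 1 := mem_ball_zero_iff.mp w.2.1
    have hzw : z ≠ w := fun h => hfz (h ▸ w.2.2)
    exact mul_le_mul_of_nonneg_left (mul_poissonKernel_le_neg_two_mul_log_norm_blaschke hzw
      (one_sub_conj_mul_ne_zero hw hz)) (Nat.cast_nonneg _)
  rw [poissonMu_zeroMassMeasure, ENNReal.ofReal_tsum_of_nonneg
    (fun w => mul_nonneg (Nat.cast_nonneg _) (neg_two_mul_log_norm_blaschke_nonneg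
      (mem_ball_zero_iff.mp w.2.1) hz)) hsum]
  refine ENNReal.tsum_le_tsum fun w => ?_
  rw [← ENNReal.ofReal_natCast, ← ENNReal.ofReal_mul (Nat.cast_nonneg _),
    ← ENNReal.ofReal_mul (mul_nonneg (Nat.cast_nonneg _)
      (one_sub_norm_sq_nonneg_of_norm_lt_one (mem_ball_zero_iff.mp w.2.1))), mul_assoc]
  exact ENNReal.ofReal_le_ofReal (hterm w)

theorem statement2_general
    (f : ℂ → ℂ)
    (ord : ℂ → ℕ)
    (σ : Measure ℂ) [IsFiniteMeasure σ] (hsupp : σ (sphere (0 : ℂ) 1)ᶜ = 0)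
    (hsummable : ∀ z ∈ ball (0 : ℂ) 1, f z ≠ 0 →
      Summable (fun w : {w : ℂ // w ∈ ball (0 : ℂ) 1 ∧ f w = 0} =>
        (ord (w : ℂ) : ℝ) *
          (-(2 : ℝ) * Real.log ‖(z - (w : ℂ)) / (1 - (starRingEnd ℂ) (w : ℂ) * z)‖)))
    (hfac : ∀ z ∈ ball (0 : ℂ) 1, f z ≠ 0 →
      -(2 : ℝ) * Real.log ‖f z‖ =
        (∑' w : {w : ℂ // w ∈ ball (0 : ℂ) 1 ∧ f w = 0},
          (ord (w : ℂ) : ℝ) *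
            (-(2 : ℝ) * Real.log ‖(z - (w : ℂ)) / (1 - (starRingEnd ℂ) (w : ℂ) * z)‖)) +
        2 * poissonInt σ z)
    (μ : Measure ℂ) (hμ : μ = zeroMassMeasure f ord + (2 : ℝ≥0∞) • σ) :
    ∀ z ∈ ball (0 : ℂ) 1, f z ≠ 0 →
      poissonMu μ z ≤ ENNReal.ofReal (-(2 : ℝ) * Real.log ‖f z‖) := by
  intro z hz hfz
  have hz1 : ‖z‖ < 1 := mem_ball_zero_iff.mp hz
  have hzeros := poissonMu_zeroMassMeasure_le (ord := ord) hz1 hfz (hsummable z hz hfz)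
  have hsum_nonneg : 0 ≤ ∑' w : {w : ℂ // w ∈ ball (0 : ℂ) 1 ∧ f w = 0},
      (ord (w : ℂ) : ℝ) *
        (-(2 : ℝ) * Real.log ‖(z - (w : ℂ)) / (1 - (starRingEnd ℂ) (w : ℂ) * z)‖) :=
    tsum_nonneg fun w => mul_nonneg (Nat.cast_nonneg _)
      (neg_two_mul_log_norm_blaschke_nonneg (mem_ball_zero_iff.mp w.2.1) hz1)
  have hP_nonneg : 0 ≤ poissonInt σ z := integral_nonneg fun ξ =>
    div_nonneg (one_sub_norm_sq_nonneg_of_norm_lt_one hz1) (sq_nonneg _)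
  rw [hμ, poissonMu_add, poissonMu_smul, poissonMu_eq_ofReal_poissonInt hsupp hz1, hfac z hz hfz,
    ENNReal.ofReal_add hsum_nonneg (by positivity), ENNReal.ofReal_mul zero_le_two,
    ENNReal.ofReal_ofNat]
  gcongr

/-- Lemma 3(a): `log |f(z)|⁻² ≥ P[μ](z)`. -/
theorem statement2
    (f : ℂ → ℂ) (hf : DifferentiableOn ℂ f (ball (0 : ℂ) 1))
    (hmap : ∀ z ∈ ball (0 : ℂ) 1, f z ∈ ball (0 : ℂ) 1)
    (hne : ∃ z ∈ ball (0 : ℂ) 1, f z ≠ 0)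
    (ord : ℂ → ℕ)
    (hord : ∀ w ∈ ball (0 : ℂ) 1, f w = 0 →
      ∃ g : ℂ → ℂ, AnalyticAt ℂ g w ∧ g w ≠ 0 ∧
        ∀ᶠ ζ in nhds w, f ζ = (ζ - w) ^ ord w * g ζ)
    (σ : Measure ℂ) [IsFiniteMeasure σ] (hsupp : σ (sphere (0 : ℂ) 1)ᶜ = 0)
    (hsummable : ∀ z ∈ ball (0 : ℂ) 1, f z ≠ 0 →
      Summable (fun w : {w : ℂ // w ∈ ball (0 : ℂ) 1 ∧ f w = 0} =>
        (ord (w : ℂ) : ℝ) *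
          (-(2 : ℝ) * Real.log ‖(z - (w : ℂ)) / (1 - (starRingEnd ℂ) (w : ℂ) * z)‖)))
    (hfac : ∀ z ∈ ball (0 : ℂ) 1, f z ≠ 0 →
      -(2 : ℝ) * Real.log ‖f z‖ =
        (∑' w : {w : ℂ // w ∈ ball (0 : ℂ) 1 ∧ f w = 0},
          (ord (w : ℂ) : ℝ) *
            (-(2 : ℝ) * Real.log ‖(z - (w : ℂ)) / (1 - (starRingEnd ℂ) (w : ℂ) * z)‖)) +
        2 * poissonInt σ z)
    (μ : Measure ℂ) (hμ : μ = zeroMassMeasure f ord + (2 : ℝ≥0∞) • σ) :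
    ∀ z ∈ ball (0 : ℂ) 1, f z ≠ 0 →
      poissonMu μ z ≤ ENNReal.ofReal (-(2 : ℝ) * Real.log ‖f z‖) :=
  statement2_general f ord σ hsupp hsummable hfac μ hμ
end
end

section
/- Let σ be a finite positive Borel measure on ∂𝔻 with Poisson integral u(z) = ∫_{∂𝔻} (1−|z|²)/|ξ−z|² dσ(ξ). Suppose there exists c > 0 such that σ(I) ≥ c·|I|·u(z_I) for every arc I ⊂ ∂𝔻, where z_I = (1−|I|)ξ_I with ξ_I the center of I. Then σ is a doubling measure: there exists a constant C = C(c) > 0 such that σ(2I) ≤ C·σ(I) for every arc I ⊂ ∂𝔻, where 2I is the arc with the same center as I and twice its length. -/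
open MeasureTheory Complex Set Metric Filter
open scoped ENNReal NNReal Topology

noncomputable section

/-!
Write `z = (1 - t)ξ` for the point attached to the arc `I` of length `t` centred at `ξ`. Every point
of `2I` lies within `(2π + 1)t` of `z`, while `1 - |z|² ≥ t`, so the Poisson kernel at `z` is at least
`1 / ((2π + 1)² t)` on `2I`. Integrating against `σ` gives `σ(2I) ≤ (2π + 1)² t u(z)`, and condition
`σ(I) ≥ c t u(z)` turns this into `σ(2I) ≤ (2π + 1)² / c · σ(I)`.
-/

def unitPoissonKernel (z η : ℂ) : ℝ :=
  (1 - ‖z‖ ^ 2) / ‖η - z‖ ^ 2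

theorem unitPoissonKernel_nonneg {z : ℂ} (hz : ‖z‖ ≤ 1) (η : ℂ) : 0 ≤ unitPoissonKernel z η := by
  unfold unitPoissonKernel
  have : ‖z‖ ^ 2 ≤ 1 := pow_le_one₀ (norm_nonneg z) hz
  exact div_nonneg (by linarith) (sq_nonneg _)

theorem unitPoissonKernel_le {z η : ℂ} (hz : ‖z‖ < 1) (hη : ‖η‖ = 1) :
    unitPoissonKernel z η ≤ (1 + ‖z‖) / (1 - ‖z‖) := by
  have hgap : 0 < 1 - ‖z‖ := by linarith
  have hdist : 1 - ‖z‖ ≤ ‖η - z‖ := by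
    simpa [hη] using norm_sub_norm_le η z
  calc unitPoissonKernel z η = (1 - ‖z‖) * (1 + ‖z‖) / ‖η - z‖ ^ 2 := by
        unfold unitPoissonKernel; ring
    _ ≤ (1 - ‖z‖) * (1 + ‖z‖) / (1 - ‖z‖) ^ 2 := by gcongr
    _ = (1 + ‖z‖) / (1 - ‖z‖) := by field_simp

theorem integrable_unitPoissonKernel {σ : Measure ℂ} [IsFiniteMeasure σ]
    (hsupp : σ (sphere (0 : ℂ) 1)ᶜ = 0) {z : ℂ} (hz : ‖z‖ < 1) :
    Integrable (unitPoissonKernel z) σ := by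
  have hsphere : ∀ᵐ η ∂σ, η ∈ sphere (0 : ℂ) 1 := ae_iff.2 hsupp
  refine (integrable_const ((1 + ‖z‖) / (1 - ‖z‖))).mono' ?_ ?_
  · unfold unitPoissonKernel
    exact Measurable.aestronglyMeasurable (by fun_prop)
  · filter_upwards [hsphere] with η hη
    rw [mem_sphere_zero_iff_norm] at hη
    rw [Real.norm_of_nonneg (unitPoissonKernel_nonneg hz.le η)]
    exact unitPoissonKernel_le hz hη

theorem norm_of_mem_bdryArc {ξ η : ℂ} {s : ℝ} (hξ : ‖ξ‖ = 1) (hη : η ∈ bdryArc ξ s) :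
    ‖η‖ = 1 := by
  obtain ⟨θ, -, rfl⟩ := hη
  rw [norm_mul, Complex.norm_exp_ofReal_mul_I, hξ, one_mul]

theorem norm_sub_center_le_of_mem_bdryArc {ξ η : ℂ} {s : ℝ} (hξ : ‖ξ‖ = 1)
    (hη : η ∈ bdryArc ξ s) : ‖η - ξ‖ ≤ Real.pi * s := by
  obtain ⟨θ, hθ, rfl⟩ := hη
  calc ‖Complex.exp (θ * Complex.I) * ξ - ξ‖ = ‖Complex.exp (Complex.I * θ) - 1‖ := by
        rw [← sub_one_mul, norm_mul, hξ, mul_one, mul_comm]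
    _ ≤ ‖θ‖ := Real.norm_exp_I_mul_ofReal_sub_one_le
    _ ≤ Real.pi * s := hθ

theorem norm_ofReal_one_sub_mul {ξ : ℂ} (hξ : ‖ξ‖ = 1) {t : ℝ} (ht : t ≤ 1) :
    ‖((1 : ℝ) - t) * ξ‖ = 1 - t := by
  rw [← Complex.ofReal_sub, norm_mul, hξ, mul_one, Complex.norm_real,
    Real.norm_of_nonneg (by linarith)]

theorem inv_le_unitPoissonKernel_of_mem_bdryArc {ξ η : ℂ} {t s : ℝ} (hξ : ‖ξ‖ = 1)
    (ht : t ∈ Ioc (0 : ℝ) 1) (hs : s ≤ 2 * t) (hη : η ∈ bdryArc ξ s) :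
    ((2 * Real.pi + 1) ^ 2 * t)⁻¹ ≤ unitPoissonKernel (((1 : ℝ) - t) * ξ) η := by
  obtain ⟨ht0, ht1⟩ := ht
  set z : ℂ := ((1 : ℝ) - t) * ξ
  have hz : ‖z‖ = 1 - t := norm_ofReal_one_sub_mul hξ ht1
  have hξz : ‖ξ - z‖ = t := by
    rw [show ξ - z = (t : ℂ) * ξ by simp only [z]; push_cast; ring, norm_mul, hξ, mul_one,
      Complex.norm_real, Real.norm_of_nonneg ht0.le]
  have hfar : t ≤ ‖η - z‖ := by
    simpa [norm_of_mem_bdryArc hξ hη, hz] using norm_sub_norm_le η z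
  have hnear : ‖η - z‖ ≤ (2 * Real.pi + 1) * t :=
    calc ‖η - z‖ ≤ ‖η - ξ‖ + ‖ξ - z‖ := norm_sub_le_norm_sub_add_norm_sub η ξ z
      _ ≤ Real.pi * (2 * t) + t := by
        rw [hξz]
        gcongr
        exact (norm_sub_center_le_of_mem_bdryArc hξ hη).trans (by gcongr)
      _ = (2 * Real.pi + 1) * t := by ring
  calc ((2 * Real.pi + 1) ^ 2 * t)⁻¹ = t / ((2 * Real.pi + 1) * t) ^ 2 := by
        field_simp
    _ ≤ t * (2 - t) / ‖η - z‖ ^ 2 :=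
        div_le_div₀ (by nlinarith) (by nlinarith) (pow_pos (ht0.trans_le hfar) 2)
          (pow_le_pow_left₀ (norm_nonneg _) hnear 2)
    _ = unitPoissonKernel z η := by
        rw [unitPoissonKernel, hz]; ring

theorem measureReal_bdryArc_le_mul_poissonInt {σ : Measure ℂ} [IsFiniteMeasure σ]
    (hsupp : σ (sphere (0 : ℂ) 1)ᶜ = 0) {ξ : ℂ} (hξ : ‖ξ‖ = 1) {t s : ℝ}
    (ht : t ∈ Ioc (0 : ℝ) 1) (hs : s ≤ 2 * t) :
    σ.real (bdryArc ξ s) ≤ (2 * Real.pi + 1) ^ 2 * t * poissonInt σ (((1 : ℝ) - t) * ξ) := by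
  set z : ℂ := ((1 : ℝ) - t) * ξ
  set ε := ((2 * Real.pi + 1) ^ 2 * t)⁻¹
  have hε : 0 < ε := by have := ht.1; positivity
  have hz : ‖z‖ < 1 := by
    rw [norm_ofReal_one_sub_mul hξ ht.2]
    linarith [ht.1]
  have hmarkov : ε * σ.real {η | ε ≤ unitPoissonKernel z η} ≤ poissonInt σ z :=
    mul_meas_ge_le_integral_of_nonneg (ae_of_all _ (unitPoissonKernel_nonneg hz.le))
      (integrable_unitPoissonKernel hsupp hz) ε
  have harc : σ.real (bdryArc ξ s) ≤ σ.real {η | ε ≤ unitPoissonKernel z η} :=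
    measureReal_mono fun η hη => inv_le_unitPoissonKernel_of_mem_bdryArc hξ ht hs hη
  calc σ.real (bdryArc ξ s) ≤ ε⁻¹ * (ε * σ.real {η | ε ≤ unitPoissonKernel z η}) := by
        rwa [inv_mul_cancel_left₀ hε.ne']
    _ ≤ ε⁻¹ * poissonInt σ z := by gcongr
    _ = (2 * Real.pi + 1) ^ 2 * t * poissonInt σ z := by rw [inv_inv]

/-- Remark: condition (b) of Theorem 1 implies that `σ` is a doubling measure. -/
theorem statement13 (σ : Measure ℂ) [IsFiniteMeasure σ]
    (hsupp : σ (sphere (0 : ℂ) 1)ᶜ = 0)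
    (c : ℝ) (hc : 0 < c)
    (hb : ∀ ξ : ℂ, ‖ξ‖ = 1 → ∀ t ∈ Ioc (0 : ℝ) 1,
      c * (t * poissonInt σ (((1 : ℝ) - t) * ξ)) ≤ (σ (bdryArc ξ t)).toReal) :
    ∃ C > (0 : ℝ), ∀ ξ : ℂ, ‖ξ‖ = 1 → ∀ t ∈ Ioc (0 : ℝ) 1,
      σ (bdryArc ξ (min (2 * t) 1)) ≤ ENNReal.ofReal C * σ (bdryArc ξ t) := by
  set K : ℝ := (2 * Real.pi + 1) ^ 2
  refine ⟨K / c, by positivity, fun ξ hξ t ht => ?_⟩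
  have hreal : σ.real (bdryArc ξ (min (2 * t) 1)) ≤ K / c * σ.real (bdryArc ξ t) :=
    calc σ.real (bdryArc ξ (min (2 * t) 1))
        ≤ K * t * poissonInt σ (((1 : ℝ) - t) * ξ) :=
          measureReal_bdryArc_le_mul_poissonInt hsupp hξ ht (min_le_left _ _)
      _ = K / c * (c * (t * poissonInt σ (((1 : ℝ) - t) * ξ))) := by field_simp
      _ ≤ K / c * σ.real (bdryArc ξ t) := by gcongr; exact hb ξ hξ t ht
  rw [← ofReal_measureReal (measure_ne_top σ (bdryArc ξ t)), ← ENNReal.ofReal_mul (by positivity)]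
  exact (ENNReal.le_ofReal_iff_toReal_le (measure_ne_top σ _) (by positivity)).2 hreal

end
end

section
/- Let σ be a finite positive Borel measure on ∂𝔻 with Poisson integral u(z) = ∫_{∂𝔻} (1−|z|²)/|ξ−z|² dσ(ξ), and let ε ∈ (0,1). If σ(2I) ≤ 2(1+ε)·σ(I) for every arc I ⊂ ∂𝔻, then there exists a constant c = c(ε) > 0 such that σ(I) ≥ c·|I|·u(z_I) for every arc I ⊂ ∂𝔻, where z_I = (1−|I|)ξ_I with ξ_I the center of I. -/
open MeasureTheory Complex Set Metric Filter
open scoped ENNReal NNReal Topology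

noncomputable section

/-! Write `z = (1 - t) ξ` and `Aₖ = bdryArc ξ (2ᵏ t)`. On the circle the Poisson kernel at `z` is
at most `2t / |η - z|²`. A point outside `Aₖ` lies at distance at least `2ᵏ⁺¹ t` from `ξ`, hence at
least `2ᵏ t` from `z` (as `|η - z| ≥ t = |ξ - z|`); so if `k` is the first index with `η ∈ Aₖ`, the
kernel at `η` is at most `8 · 4⁻ᵏ / t`. Iterating the doubling hypothesis gives
`σ(Aₖ) ≤ Dᵏ σ(A₀)` with `D = 2(1 + ε) < 4`, so summing over `k` yields a convergent geometric
series and `t u(z) ≤ 32 / (4 - D) · σ(A₀)`. -/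

section BdryArc

variable {ξ η : ℂ} {s : ℝ}

lemma norm_eq_one_of_mem_bdryArc (hξ : ‖ξ‖ = 1) (hη : η ∈ bdryArc ξ s) : ‖η‖ = 1 := by
  obtain ⟨θ, -, rfl⟩ := hη
  rw [norm_mul, Complex.norm_exp_ofReal_mul_I, one_mul, hξ]

lemma bdryArc_subset_sphere (hξ : ‖ξ‖ = 1) : bdryArc ξ s ⊆ sphere (0 : ℂ) 1 := fun _ hη =>
  mem_sphere_zero_iff_norm.mpr (norm_eq_one_of_mem_bdryArc hξ hη)

lemma exists_angle_of_norm_eq_one (hξ : ‖ξ‖ = 1) (hη : ‖η‖ = 1) :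
    ∃ θ : ℝ, |θ| ≤ Real.pi ∧ η = Complex.exp (θ * Complex.I) * ξ := by
  have hξ0 : ξ ≠ 0 := norm_ne_zero_iff.mp (by rw [hξ]; exact one_ne_zero)
  refine ⟨Complex.arg (η / ξ), Complex.abs_arg_le_pi _, ?_⟩
  have h := Complex.norm_mul_exp_arg_mul_I (η / ξ)
  rw [norm_div, hξ, hη, div_one, Complex.ofReal_one, one_mul] at h
  rw [h, div_mul_cancel₀ _ hξ0]

lemma bdryArc_eq_sphere (hξ : ‖ξ‖ = 1) (hs : 1 ≤ s) : bdryArc ξ s = sphere (0 : ℂ) 1 := by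
  refine (bdryArc_subset_sphere hξ).antisymm fun η hη => ?_
  obtain ⟨θ, hθ, rfl⟩ := exists_angle_of_norm_eq_one hξ (mem_sphere_zero_iff_norm.mp hη)
  exact ⟨θ, hθ.trans (le_mul_of_one_le_right Real.pi_pos.le hs), rfl⟩

lemma bdryArc_min_one (hξ : ‖ξ‖ = 1) : bdryArc ξ (min s 1) = bdryArc ξ s := by
  rcases le_total s 1 with hs | hs
  · rw [min_eq_left hs]
  · rw [min_eq_right hs, bdryArc_eq_sphere hξ le_rfl, bdryArc_eq_sphere hξ hs]

lemma measurableSet_bdryArc (ξ : ℂ) (s : ℝ) : MeasurableSet (bdryArc ξ s) := by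
  have h : bdryArc ξ s =
      (fun θ : ℝ => Complex.exp (θ * Complex.I) * ξ) '' Icc (-(Real.pi * s)) (Real.pi * s) := by
    ext η
    simp only [bdryArc, mem_ofPred_eq, mem_image, mem_Icc, abs_le, eq_comm]
  rw [h]
  exact (isCompact_Icc.image (by fun_prop)).isClosed.measurableSet

/-- Jordan's inequality `|sin x| ≥ 2|x|/π` converts angular distance into chordal distance. -/
lemma two_mul_le_norm_sub_of_notMem_bdryArc (hξ : ‖ξ‖ = 1) (hη : ‖η‖ = 1)
    (h : η ∉ bdryArc ξ s) : 2 * s ≤ ‖η - ξ‖ := by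
  obtain ⟨θ, hθ, rfl⟩ := exists_angle_of_norm_eq_one hξ hη
  have hθs : Real.pi * s < |θ| := lt_of_not_ge fun h' => h ⟨θ, h', rfl⟩
  have hs : s ≤ |Real.sin (θ / 2)| :=
    calc s ≤ |θ| / Real.pi := (le_div_iff₀ Real.pi_pos).mpr (by linarith)
      _ = 2 / Real.pi * |θ / 2| := by rw [abs_div, abs_two]; ring
      _ ≤ |Real.sin (θ / 2)| :=
        Real.mul_abs_le_abs_sin (by rw [abs_div, abs_two]; linarith [Real.pi_pos])
  rw [← sub_one_mul, norm_mul, hξ, mul_one, mul_comm (θ : ℂ), Complex.norm_exp_I_mul_ofReal_sub_one,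
    Real.norm_eq_abs, abs_mul, abs_two]
  linarith

end BdryArc

section Doubling

variable {σ : Measure ℂ} {D : ℝ≥0∞} {ξ : ℂ}

lemma measure_bdryArc_two_mul_le (hD : 1 ≤ D) (hξ : ‖ξ‖ = 1)
    (hdb : ∀ t ∈ Ioc (0 : ℝ) 1, σ (bdryArc ξ (min (2 * t) 1)) ≤ D * σ (bdryArc ξ t))
    {t : ℝ} (ht : 0 < t) : σ (bdryArc ξ (2 * t)) ≤ D * σ (bdryArc ξ t) := by
  rcases le_or_gt t 1 with h | h
  · rw [← bdryArc_min_one hξ]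
    exact hdb t ⟨ht, h⟩
  · rw [bdryArc_eq_sphere hξ (by linarith), bdryArc_eq_sphere hξ h.le]
    exact le_mul_of_one_le_left' hD

lemma measure_bdryArc_two_pow_mul_le (hD : 1 ≤ D) (hξ : ‖ξ‖ = 1)
    (hdb : ∀ t ∈ Ioc (0 : ℝ) 1, σ (bdryArc ξ (min (2 * t) 1)) ≤ D * σ (bdryArc ξ t))
    {t : ℝ} (ht : 0 < t) (k : ℕ) : σ (bdryArc ξ (2 ^ k * t)) ≤ D ^ k * σ (bdryArc ξ t) := by
  induction k with
  | zero => simp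
  | succ k ih =>
    calc σ (bdryArc ξ (2 ^ (k + 1) * t)) = σ (bdryArc ξ (2 * (2 ^ k * t))) := by
          rw [pow_succ', mul_assoc]
      _ ≤ D * σ (bdryArc ξ (2 ^ k * t)) :=
          measure_bdryArc_two_mul_le hD hξ hdb (by positivity)
      _ ≤ D * (D ^ k * σ (bdryArc ξ t)) := by gcongr
      _ = D ^ (k + 1) * σ (bdryArc ξ t) := by rw [pow_succ', mul_assoc]

end Doubling

section PoissonKernel

variable {ξ η : ℂ} {t : ℝ}

lemma le_norm_sub_real_mul (hξ : ‖ξ‖ = 1) (ht : t ∈ Ioc (0 : ℝ) 1) (hη : ‖η‖ = 1) :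
    t ≤ ‖η - ((1 - t : ℝ) : ℂ) * ξ‖ := by
  have h := norm_sub_norm_le η (((1 - t : ℝ) : ℂ) * ξ)
  rw [hη, norm_mul, hξ, mul_one, Complex.norm_real, Real.norm_of_nonneg (by linarith [ht.2])] at h
  linarith

lemma norm_sub_le_two_mul_norm_sub_real_mul (hξ : ‖ξ‖ = 1) (ht : t ∈ Ioc (0 : ℝ) 1)
    (hη : ‖η‖ = 1) : ‖η - ξ‖ ≤ 2 * ‖η - ((1 - t : ℝ) : ℂ) * ξ‖ := by
  have hzξ : ‖((1 - t : ℝ) : ℂ) * ξ - ξ‖ = t := by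
    rw [← sub_one_mul, norm_mul, hξ, mul_one, Complex.ofReal_sub, Complex.ofReal_one,
      sub_sub_cancel_left, norm_neg, Complex.norm_real, Real.norm_of_nonneg ht.1.le]
  have := norm_sub_le_norm_sub_add_norm_sub η (((1 - t : ℝ) : ℂ) * ξ) ξ
  linarith [le_norm_sub_real_mul hξ ht hη]

lemma two_pow_mul_le_norm_sub_real_mul (hξ : ‖ξ‖ = 1) (ht : t ∈ Ioc (0 : ℝ) 1)
    (hη : ‖η‖ = 1) {k : ℕ} (hk : ∀ j < k, η ∉ bdryArc ξ (2 ^ j * t)) :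
    2 ^ k * t / 2 ≤ ‖η - ((1 - t : ℝ) : ℂ) * ξ‖ := by
  cases k with
  | zero => linarith [le_norm_sub_real_mul hξ ht hη, ht.1]
  | succ j =>
    have := two_mul_le_norm_sub_of_notMem_bdryArc hξ hη (hk j j.lt_succ_self)
    have := norm_sub_le_two_mul_norm_sub_real_mul hξ ht hη
    rw [pow_succ]
    linarith

lemma poissonKernel_le_of_le_norm_sub (hξ : ‖ξ‖ = 1) (ht : t ∈ Ioc (0 : ℝ) 1) {r : ℝ}
    (hr : 0 < r) (h : r ≤ ‖η - ((1 - t : ℝ) : ℂ) * ξ‖) :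
    (1 - ‖((1 - t : ℝ) : ℂ) * ξ‖ ^ 2) / ‖η - ((1 - t : ℝ) : ℂ) * ξ‖ ^ 2 ≤ 2 * t / r ^ 2 := by
  rw [norm_mul, hξ, mul_one, Complex.norm_real, Real.norm_eq_abs, sq_abs]
  gcongr
  · nlinarith [ht.1, ht.2]
  · nlinarith [ht.1]

lemma ofReal_poissonKernel_le_tsum_indicator (hξ : ‖ξ‖ = 1) (ht : t ∈ Ioc (0 : ℝ) 1)
    (hη : ‖η‖ = 1) :
    ENNReal.ofReal ((1 - ‖((1 - t : ℝ) : ℂ) * ξ‖ ^ 2) / ‖η - ((1 - t : ℝ) : ℂ) * ξ‖ ^ 2) ≤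
      ∑' k : ℕ, (bdryArc ξ (2 ^ k * t)).indicator
        (fun _ => ENNReal.ofReal (8 / t) * 4⁻¹ ^ k) η := by
  classical
  have hex : ∃ k : ℕ, η ∈ bdryArc ξ (2 ^ k * t) := by
    obtain ⟨k, hk⟩ := pow_unbounded_of_one_lt t⁻¹ one_lt_two
    refine ⟨k, ?_⟩
    rw [bdryArc_eq_sphere hξ ((inv_le_iff_one_le_mul₀ ht.1).mp hk.le)]
    exact mem_sphere_zero_iff_norm.mpr hη
  obtain ⟨k, hk, hk_min⟩ : ∃ k : ℕ, η ∈ bdryArc ξ (2 ^ k * t) ∧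
      ∀ j < k, η ∉ bdryArc ξ (2 ^ j * t) :=
    ⟨Nat.find hex, Nat.find_spec hex, fun _ => Nat.find_min hex⟩
  have hdist := two_pow_mul_le_norm_sub_real_mul hξ ht hη hk_min
  have hbound : 2 * t / (2 ^ k * t / 2) ^ 2 = 8 / t * 4⁻¹ ^ k := by
    have h4 : ((2 : ℝ) ^ k) ^ 2 = 4 ^ k := by rw [← pow_mul, mul_comm, pow_mul]; norm_num
    rw [div_pow, mul_pow, h4, inv_pow]
    field_simp
    ring
  calc _ ≤ ENNReal.ofReal (8 / t * 4⁻¹ ^ k) := by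
        gcongr
        rw [← hbound]
        exact poissonKernel_le_of_le_norm_sub hξ ht (by positivity [ht.1]) hdist
    _ = ENNReal.ofReal (8 / t) * 4⁻¹ ^ k := by
        rw [ENNReal.ofReal_mul (by positivity [ht.1]), ENNReal.ofReal_pow (by norm_num),
          ENNReal.ofReal_inv_of_pos (by norm_num), ENNReal.ofReal_ofNat]
    _ = (bdryArc ξ (2 ^ k * t)).indicator (fun _ => ENNReal.ofReal (8 / t) * 4⁻¹ ^ k) η := by
        rw [indicator_of_mem hk]
    _ ≤ _ := ENNReal.le_tsum k

end PoissonKernel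

section PoissonIntegral

variable {σ : Measure ℂ} {ξ : ℂ} {t : ℝ}

lemma lintegral_poissonKernel_le (hsupp : σ (sphere (0 : ℂ) 1)ᶜ = 0) {D : ℝ} (hD1 : 1 ≤ D)
    (hD4 : D < 4) (hξ : ‖ξ‖ = 1)
    (hdb : ∀ t ∈ Ioc (0 : ℝ) 1,
      σ (bdryArc ξ (min (2 * t) 1)) ≤ ENNReal.ofReal D * σ (bdryArc ξ t))
    (ht : t ∈ Ioc (0 : ℝ) 1) :
    ∫⁻ η, ENNReal.ofReal
        ((1 - ‖((1 - t : ℝ) : ℂ) * ξ‖ ^ 2) / ‖η - ((1 - t : ℝ) : ℂ) * ξ‖ ^ 2) ∂σ ≤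
      ENNReal.ofReal (32 / (t * (4 - D))) * σ (bdryArc ξ t) := by
  have hD : 1 ≤ ENNReal.ofReal D := ENNReal.one_le_ofReal.mpr hD1
  have hratio : 4⁻¹ * ENNReal.ofReal D = ENNReal.ofReal (D / 4) := by
    rw [div_eq_inv_mul, ENNReal.ofReal_mul (by norm_num), ENNReal.ofReal_inv_of_pos (by norm_num),
      ENNReal.ofReal_ofNat]
  have hgeom : ENNReal.ofReal (8 / t) * (1 - 4⁻¹ * ENNReal.ofReal D)⁻¹ =
      ENNReal.ofReal (32 / (t * (4 - D))) := by
    rw [hratio, ← ENNReal.ofReal_one, ← ENNReal.ofReal_sub _ (by linarith),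
      ← ENNReal.ofReal_inv_of_pos (by linarith), ← ENNReal.ofReal_mul (by positivity [ht.1])]
    congr 1
    field_simp
    ring
  have hsphere : ∀ᵐ η ∂σ, η ∈ sphere (0 : ℂ) 1 := mem_ae_iff.mpr hsupp
  calc _ ≤ ∫⁻ η, ∑' k : ℕ, (bdryArc ξ (2 ^ k * t)).indicator
          (fun _ => ENNReal.ofReal (8 / t) * 4⁻¹ ^ k) η ∂σ := by
        refine lintegral_mono_ae (hsphere.mono fun η hη => ?_)
        exact ofReal_poissonKernel_le_tsum_indicator hξ ht (mem_sphere_zero_iff_norm.mp hη)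
    _ = ∑' k : ℕ, ENNReal.ofReal (8 / t) * 4⁻¹ ^ k * σ (bdryArc ξ (2 ^ k * t)) := by
        rw [lintegral_tsum fun k => (measurable_const.indicator
          (measurableSet_bdryArc _ _)).aemeasurable]
        simp only [lintegral_indicator_const (measurableSet_bdryArc _ _)]
    _ ≤ ∑' k : ℕ, ENNReal.ofReal (8 / t) * σ (bdryArc ξ t) * (4⁻¹ * ENNReal.ofReal D) ^ k := by
        refine ENNReal.tsum_le_tsum fun k => ?_
        calc ENNReal.ofReal (8 / t) * 4⁻¹ ^ k * σ (bdryArc ξ (2 ^ k * t))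
            ≤ ENNReal.ofReal (8 / t) * 4⁻¹ ^ k * (ENNReal.ofReal D ^ k * σ (bdryArc ξ t)) := by
              gcongr
              exact measure_bdryArc_two_pow_mul_le hD hξ hdb ht.1 k
          _ = _ := by ring
    _ = ENNReal.ofReal (32 / (t * (4 - D))) * σ (bdryArc ξ t) := by
        rw [ENNReal.tsum_mul_left, ENNReal.tsum_geometric, ← hgeom]
        ring

lemma mul_poissonInt_le [IsFiniteMeasure σ] (hsupp : σ (sphere (0 : ℂ) 1)ᶜ = 0) {D : ℝ}
    (hD1 : 1 ≤ D) (hD4 : D < 4) (hξ : ‖ξ‖ = 1)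
    (hdb : ∀ t ∈ Ioc (0 : ℝ) 1,
      σ (bdryArc ξ (min (2 * t) 1)) ≤ ENNReal.ofReal D * σ (bdryArc ξ t))
    (ht : t ∈ Ioc (0 : ℝ) 1) :
    (4 - D) / 32 * (t * poissonInt σ (((1 : ℝ) - t) * ξ)) ≤ (σ (bdryArc ξ t)).toReal := by
  have hnum : 0 ≤ 1 - ‖((1 - t : ℝ) : ℂ) * ξ‖ ^ 2 := by
    rw [norm_mul, hξ, mul_one, Complex.norm_real, Real.norm_eq_abs, sq_abs]
    nlinarith [ht.1, ht.2]
  have hmeas : Measurable fun η : ℂ =>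
      (1 - ‖((1 - t : ℝ) : ℂ) * ξ‖ ^ 2) / ‖η - ((1 - t : ℝ) : ℂ) * ξ‖ ^ 2 :=
    measurable_const.div ((measurable_id.sub_const _).norm.pow_const 2)
  have hP : poissonInt σ (((1 : ℝ) - t) * ξ) ≤ 32 / (t * (4 - D)) * (σ (bdryArc ξ t)).toReal := by
    rw [poissonInt, ← Complex.ofReal_sub, integral_eq_lintegral_of_nonneg_ae
      (.of_forall fun η => div_nonneg hnum (sq_nonneg _)) hmeas.aestronglyMeasurable,
      ← ENNReal.toReal_ofReal (by positivity [ht.1] : 0 ≤ 32 / (t * (4 - D))),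
      ← ENNReal.toReal_mul]
    exact ENNReal.toReal_mono (by finiteness) (lintegral_poissonKernel_le hsupp hD1 hD4 hξ hdb ht)
  calc (4 - D) / 32 * (t * poissonInt σ (((1 : ℝ) - t) * ξ))
      ≤ (4 - D) / 32 * (t * (32 / (t * (4 - D)) * (σ (bdryArc ξ t)).toReal)) := by
        gcongr
        exact ht.1.le
    _ = (σ (bdryArc ξ t)).toReal := by
        have : (4 : ℝ) - D ≠ 0 := by linarith
        field_simp [ht.1.ne']

end PoissonIntegral

/-- Remark: a doubling measure with doubling constant close to `2` satisfies
condition (b) of Theorem 1. -/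
theorem statement14 (σ : Measure ℂ) [IsFiniteMeasure σ]
    (hsupp : σ (sphere (0 : ℂ) 1)ᶜ = 0)
    (ε : ℝ) (hε : ε ∈ Ioo (0 : ℝ) 1)
    (hdb : ∀ ξ : ℂ, ‖ξ‖ = 1 → ∀ t ∈ Ioc (0 : ℝ) 1,
      σ (bdryArc ξ (min (2 * t) 1)) ≤ ENNReal.ofReal (2 * (1 + ε)) * σ (bdryArc ξ t)) :
    ∃ c > (0 : ℝ), ∀ ξ : ℂ, ‖ξ‖ = 1 → ∀ t ∈ Ioc (0 : ℝ) 1,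
      c * (t * poissonInt σ (((1 : ℝ) - t) * ξ)) ≤ (σ (bdryArc ξ t)).toReal := by
  obtain ⟨hε0, hε1⟩ := hε
  refine ⟨(4 - 2 * (1 + ε)) / 32, by linarith, fun ξ hξ t ht => ?_⟩
  exact mul_poissonInt_le hsupp (by linarith) (by linarith) hξ (hdb ξ hξ) ht

end
end

section
/- Let 0 < η < c < 1 and let I ⊂ ∂𝔻 be an arc. Let 𝒢 = {I_j} be a collection of pairwise disjoint dyadic subarcs of I with Σ_j |I_j| ≥ c·|I|. Then there exists a subcollection 𝒢₁ ⊆ 𝒢 such that (i) Σ_{I_j ∈ 𝒢₁} |I_j| ≥ η·|I|, and (ii) for every dyadic subarc L ⊆ I that contains some arc of 𝒢₁, Σ_{I_j ∈ 𝒢, I_j ⊆ L} |I_j| ≥ (c−η)·|L|. -/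
open MeasureTheory Complex Set Metric Filter
open scoped ENNReal NNReal Topology

noncomputable section

/-!
Call a dyadic subinterval of `[0, 1)` light if the intervals of `G` inside it have total
length less than `c - η` times its own, and let `G₁` consist of the intervals of `G` that lie
in no light interval, so that (ii) holds by construction. Every interval of `G \ G₁` lies in a
maximal light interval; two dyadic intervals are nested or disjoint, so the maximal light
intervals are pairwise disjoint and their lengths add up to at most `1`. Hence `G \ G₁`
carries total length at most `c - η`, leaving at least `η` for `G₁`. The arcs are carried
to dyadic subintervals of `[0, 1)` by the parametrization `x ↦ exp (i π t (2x - 1)) ξ` of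
`I`, which is injective on `[0, 1)` because `t ≤ 1`.
-/

open Real

def dyadicIco (p : ℕ × ℕ) : Set ℝ := Ico (p.2 / 2 ^ p.1) ((p.2 + 1) / 2 ^ p.1)

lemma mem_dyadicIco {p : ℕ × ℕ} {x : ℝ} :
    x ∈ dyadicIco p ↔ 0 ≤ x ∧ ⌊x * 2 ^ p.1⌋₊ = p.2 := by
  have h2 : (0 : ℝ) < 2 ^ p.1 := by positivity
  constructor
  · rintro ⟨hlo, hhi⟩
    have hx : 0 ≤ x := (by positivity : (0 : ℝ) ≤ p.2 / 2 ^ p.1).trans hlo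
    exact ⟨hx, (Nat.floor_eq_iff (by positivity)).2
      ⟨(div_le_iff₀ h2).1 hlo, (lt_div_iff₀ h2).1 hhi⟩⟩
  · rintro ⟨hx, hfloor⟩
    rw [Nat.floor_eq_iff (by positivity)] at hfloor
    exact ⟨(div_le_iff₀ h2).2 hfloor.1, (lt_div_iff₀ h2).2 hfloor.2⟩

lemma dyadicIco_nonempty (p : ℕ × ℕ) : (dyadicIco p).Nonempty :=
  nonempty_Ico.2 (div_lt_div_of_pos_right (lt_add_one _) (by positivity))

lemma dyadicIco_subset_Ico_zero_one {p : ℕ × ℕ} (hp : p.2 < 2 ^ p.1) :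
    dyadicIco p ⊆ Ico 0 1 := by
  have h1 : ((p.2 : ℝ) + 1) ≤ 2 ^ p.1 := by exact_mod_cast hp
  exact fun x hx => ⟨(mem_dyadicIco.1 hx).1,
    hx.2.trans_le ((div_le_one (by positivity)).2 h1)⟩

lemma volume_dyadicIco (p : ℕ × ℕ) :
    volume (dyadicIco p) = ENNReal.ofReal ((2 ^ p.1)⁻¹) := by
  rw [dyadicIco, Real.volume_Ico]
  congr 1
  field_simp
  ring

lemma floor_mul_two_pow_eq_div (x : ℝ) {n m : ℕ} (h : n ≤ m) :
    ⌊x * 2 ^ n⌋₊ = ⌊x * 2 ^ m⌋₊ / 2 ^ (m - n) := by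
  rw [← Nat.floor_div_natCast, ← pow_sub_mul_pow 2 h]
  push_cast
  field_simp

lemma dyadicIco_subset_of_le {p q : ℕ × ℕ} (hle : q.1 ≤ p.1)
    (h : (dyadicIco p ∩ dyadicIco q).Nonempty) : dyadicIco p ⊆ dyadicIco q := by
  obtain ⟨x, hxp, hxq⟩ := h
  rw [mem_dyadicIco] at hxp hxq
  intro y hy
  rw [mem_dyadicIco] at hy ⊢
  refine ⟨hy.1, ?_⟩
  rw [floor_mul_two_pow_eq_div y hle, hy.2, ← hxp.2, ← floor_mul_two_pow_eq_div x hle,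
    hxq.2]

lemma dyadicIco_subset_or_subset_of_not_disjoint {p q : ℕ × ℕ}
    (h : ¬Disjoint (dyadicIco p) (dyadicIco q)) :
    dyadicIco p ⊆ dyadicIco q ∨ dyadicIco q ⊆ dyadicIco p := by
  rw [not_disjoint_iff_nonempty_inter] at h
  rcases le_total q.1 p.1 with hle | hle
  · exact .inl (dyadicIco_subset_of_le hle h)
  · exact .inr (dyadicIco_subset_of_le hle (inter_comm (dyadicIco p) _ ▸ h))

section MaximalDyadic

variable {B : Set (Set ℝ)}

lemma pairwiseDisjoint_maximal_of_subset_range_dyadicIco (hB : B ⊆ range dyadicIco) :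
    {m | Maximal (· ∈ B) m}.PairwiseDisjoint id := by
  intro m₁ h₁ m₂ h₂ hne
  obtain ⟨p, rfl⟩ := hB h₁.prop
  obtain ⟨q, rfl⟩ := hB h₂.prop
  by_contra h
  rcases dyadicIco_subset_or_subset_of_not_disjoint h with hpq | hqp
  · exact hne (h₁.eq_of_subset h₂.prop hpq)
  · exact hne (h₂.eq_of_subset h₁.prop hqp).symm

lemma exists_subset_maximal_of_subset_range_dyadicIco (hB : B ⊆ range dyadicIco)
    {s : Set ℝ} (hs : s ∈ B) : ∃ m, s ⊆ m ∧ Maximal (· ∈ B) m := by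
  obtain ⟨q, rfl⟩ := hB hs
  -- the coarsest dyadic interval of `B` containing `s` is maximal in `B`
  obtain ⟨r, ⟨hrB, hsr⟩, hmin⟩ := (measure fun r : ℕ × ℕ => r.1).wf.has_min
    {r | dyadicIco r ∈ B ∧ dyadicIco q ⊆ dyadicIco r} ⟨q, hs, subset_rfl⟩
  refine ⟨dyadicIco r, hsr, hrB, fun y hy hry => ?_⟩
  obtain ⟨r', rfl⟩ := hB hy
  have hle : r.1 ≤ r'.1 := not_lt.1 (hmin r' ⟨hy, hsr.trans hry⟩)
  exact dyadicIco_subset_of_le hle (by rw [inter_eq_right.2 hry]; exact dyadicIco_nonempty r)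

end MaximalDyadic

def dyadicMass (G : Set (ℕ × ℕ)) (s : Set ℝ) : ℝ≥0∞ :=
  ∑' p : {p // p ∈ G ∧ dyadicIco p ⊆ s}, volume (dyadicIco p)

def lightDyadicIcos (G : Set (ℕ × ℕ)) (δ : ℝ≥0∞) : Set (Set ℝ) :=
  {s | (∃ q : ℕ × ℕ, q.2 < 2 ^ q.1 ∧ dyadicIco q = s) ∧ dyadicMass G s < δ * volume s}

theorem tsum_volume_subset_lightDyadicIcos_le (G : Set (ℕ × ℕ)) (δ : ℝ≥0∞) :
    ∑' p : {p // p ∈ G ∧ ∃ s ∈ lightDyadicIcos G δ, dyadicIco p ⊆ s},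
      volume (dyadicIco p) ≤ δ := by
  set B := lightDyadicIcos G δ
  set M := {m | Maximal (· ∈ B) m}
  have hB : B ⊆ range dyadicIco := fun s hs => hs.1.imp fun _ hq => hq.2
  have hcover : {p | p ∈ G ∧ ∃ s ∈ B, dyadicIco p ⊆ s} ⊆
      ⋃ m ∈ M, {p | p ∈ G ∧ dyadicIco p ⊆ m} := by
    rintro p ⟨hp, s, hs, hps⟩
    obtain ⟨m, hsm, hm⟩ := exists_subset_maximal_of_subset_range_dyadicIco hB hs
    exact mem_biUnion hm ⟨hp, hps.trans hsm⟩
  have hM : ⋃ m ∈ M, m ⊆ Ico 0 1 := by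
    refine iUnion₂_subset fun m hm => ?_
    obtain ⟨⟨q, hq, rfl⟩, -⟩ := hm.prop
    exact dyadicIco_subset_Ico_zero_one hq
  calc _ ≤ ∑' p : ⋃ m ∈ M, {p | p ∈ G ∧ dyadicIco p ⊆ m}, volume (dyadicIco p) :=
        ENNReal.tsum_mono_subtype (fun p => volume (dyadicIco p)) hcover
    _ ≤ ∑' m : M, dyadicMass G m :=
        ENNReal.tsum_biUnion_le_tsum (fun p => volume (dyadicIco p)) M
          fun m => {p | p ∈ G ∧ dyadicIco p ⊆ m}
    _ ≤ ∑' m : M, δ * volume (m : Set ℝ) := ENNReal.tsum_le_tsum fun m => m.2.prop.2.le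
    _ = δ * volume (⋃ m ∈ M, m) := by
        rw [ENNReal.tsum_mul_left]
        congr 1
        exact (measure_biUnion ((countable_range dyadicIco).mono fun m hm => hB hm.prop)
          (pairwiseDisjoint_maximal_of_subset_range_dyadicIco hB)
          fun m hm => (hB hm.prop).choose_spec ▸ measurableSet_Ico).symm
    _ ≤ δ * volume (Ico (0 : ℝ) 1) := by gcongr
    _ = δ := by simp

lemma tsum_inv_two_pow_eq_toReal {ι : Type*} (f : ι → ℕ × ℕ) :
    ∑' i, ((2 : ℝ) ^ (f i).1)⁻¹ = (∑' i, volume (dyadicIco (f i))).toReal := by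
  rw [ENNReal.tsum_toReal_eq fun i => by simp [volume_dyadicIco]]
  simp [volume_dyadicIco]

theorem exists_dense_subfamily_dyadicIco (G : Set (ℕ × ℕ)) {η c : ℝ} (hη : 0 < η)
    (hηc : η < c) (hsum : c ≤ ∑' p : G, ((2 : ℝ) ^ (p : ℕ × ℕ).1)⁻¹) :
    ∃ G₁ ⊆ G, η ≤ ∑' p : G₁, ((2 : ℝ) ^ (p : ℕ × ℕ).1)⁻¹ ∧
      ∀ q : ℕ × ℕ, q.2 < 2 ^ q.1 → (∃ p ∈ G₁, dyadicIco p ⊆ dyadicIco q) →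
        (c - η) * ((2 : ℝ) ^ q.1)⁻¹ ≤
          ∑' p : {p : ℕ × ℕ // p ∈ G ∧ dyadicIco p ⊆ dyadicIco q},
            ((2 : ℝ) ^ (p : ℕ × ℕ).1)⁻¹ := by
  set δ := ENNReal.ofReal (c - η)
  set G₁ := {p | p ∈ G ∧ ¬∃ s ∈ lightDyadicIcos G δ, dyadicIco p ⊆ s}
  rw [tsum_inv_two_pow_eq_toReal] at hsum
  have hG : ∑' p : G, volume (dyadicIco p) ≠ ⊤ := fun h => by
    rw [h, ENNReal.toReal_top] at hsum
    linarith
  have hfin {A : Set (ℕ × ℕ)} (hA : A ⊆ G) : ∑' p : A, volume (dyadicIco p) ≠ ⊤ :=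
    ne_top_of_le_ne_top hG (ENNReal.tsum_mono_subtype (fun p => volume (dyadicIco p)) hA)
  refine ⟨G₁, fun p hp => hp.1, ?_, ?_⟩
  · have hcover : G ⊆ G₁ ∪ {p | p ∈ G ∧ ∃ s ∈ lightDyadicIcos G δ, dyadicIco p ⊆ s} :=
      fun p hp => (em _).elim (fun h => .inr ⟨hp, h⟩) fun h => .inl ⟨hp, h⟩
    have hsplit : ∑' p : G, volume (dyadicIco p) ≤ ∑' p : G₁, volume (dyadicIco p) + δ :=
      calc _ ≤ _ := ENNReal.tsum_mono_subtype (fun p => volume (dyadicIco p)) hcover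
        _ ≤ _ := ENNReal.tsum_union_le (fun p => volume (dyadicIco p)) _ _
        _ ≤ _ := add_le_add le_rfl (tsum_volume_subset_lightDyadicIcos_le G δ)
    have hG₁ := hfin fun p (hp : p ∈ G₁) => hp.1
    have := ENNReal.toReal_mono (ENNReal.add_ne_top.2 ⟨hG₁, ENNReal.ofReal_ne_top⟩) hsplit
    rw [ENNReal.toReal_add hG₁ ENNReal.ofReal_ne_top, ENNReal.toReal_ofReal (by linarith)] at this
    rw [tsum_inv_two_pow_eq_toReal]
    linarith
  · rintro q hq ⟨p, ⟨-, hp⟩, hpq⟩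
    have hdense : δ * volume (dyadicIco q) ≤ dyadicMass G (dyadicIco q) :=
      not_lt.1 fun h => hp ⟨dyadicIco q, ⟨⟨q, hq, rfl⟩, h⟩, hpq⟩
    have := ENNReal.toReal_mono
      (hfin (A := {p | p ∈ G ∧ dyadicIco p ⊆ dyadicIco q}) fun p hp => hp.1) hdense
    rwa [ENNReal.toReal_mul, ENNReal.toReal_ofReal (by linarith), volume_dyadicIco,
      ENNReal.toReal_ofReal (by positivity), ← tsum_inv_two_pow_eq_toReal] at this

lemma dyadicArc_eq_image {t : ℝ} (ht : 0 < t) (ξ : ℂ) (p : ℕ × ℕ) :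
    dyadicArc ξ t p =
      (fun x : ℝ => (Circle.exp (2 * π * t * x + -(π * t)) : ℂ) * ξ) '' dyadicIco p := by
  rw [dyadicIco, ← image_image (fun θ : ℝ => (Circle.exp θ : ℂ) * ξ),
    image_affine_Ico (by positivity), ← mul_div_assoc, ← mul_div_assoc, add_comm _ (-(π * t)),
    add_comm _ (-(π * t))]
  ext z
  simp only [dyadicArc, mem_image, mem_Ico, Circle.coe_exp, and_assoc, eq_comm (b := z)]
  rfl

lemma injOn_circleExp_affine {t : ℝ} (ht₀ : 0 < t) (ht₁ : t ≤ 1) {ξ : ℂ} (hξ : ξ ≠ 0) :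
    InjOn (fun x : ℝ => (Circle.exp (2 * π * t * x + -(π * t)) : ℂ) * ξ) (Ico 0 1) := by
  have hmaps : MapsTo (fun x : ℝ => 2 * π * t * x + -(π * t)) (Ico 0 1)
      (Ico (-(π * t)) (π * t)) := by
    intro x ⟨h₀, h₁⟩
    have hπt : 0 < π * t := mul_pos pi_pos ht₀
    constructor <;> nlinarith [mul_nonneg hπt.le h₀, mul_pos hπt (sub_pos.2 h₁)]
  have haffine : Function.Injective fun x : ℝ => 2 * π * t * x + -(π * t) :=
    fun x y h => by simpa [pi_ne_zero, ht₀.ne'] using h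
  exact ((mul_left_injective₀ hξ).comp Subtype.val_injective).comp_injOn
    ((Circle.exp_injOn_Ico (by nlinarith [pi_pos])).comp haffine.injOn hmaps)

lemma dyadicArc_subset_dyadicArc_iff {ξ : ℂ} (hξ : ξ ≠ 0) {t : ℝ} (ht : t ∈ Ioc 0 1)
    {p q : ℕ × ℕ} (hp : p.2 < 2 ^ p.1) (hq : q.2 < 2 ^ q.1) :
    dyadicArc ξ t p ⊆ dyadicArc ξ t q ↔ dyadicIco p ⊆ dyadicIco q := by
  rw [dyadicArc_eq_image ht.1, dyadicArc_eq_image ht.1]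
  exact (injOn_circleExp_affine ht.1 ht.2 hξ).image_subset_image_iff
    (dyadicIco_subset_Ico_zero_one hp) (dyadicIco_subset_Ico_zero_one hq)

theorem statement17_general (ξ : ℂ) (hξ : ‖ξ‖ = 1) (t : ℝ) (ht : t ∈ Ioc (0 : ℝ) 1)
    (η c : ℝ) (hη : 0 < η) (hηc : η < c)
    (G : Set (ℕ × ℕ)) (hvalid : ∀ p ∈ G, p.2 < 2 ^ p.1)
    (hsum : c * t ≤ ∑' p : G, t / 2 ^ (p : ℕ × ℕ).1) :
    ∃ G₁ ⊆ G, (η * t ≤ ∑' p : G₁, t / 2 ^ (p : ℕ × ℕ).1) ∧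
      ∀ q : ℕ × ℕ, q.2 < 2 ^ q.1 →
        (∃ p ∈ G₁, dyadicArc ξ t p ⊆ dyadicArc ξ t q) →
        (c - η) * (t / 2 ^ q.1) ≤
          ∑' p : {p : ℕ × ℕ // p ∈ G ∧ dyadicArc ξ t p ⊆ dyadicArc ξ t q},
            t / 2 ^ (p : ℕ × ℕ).1 := by
  have hξ₀ : ξ ≠ 0 := norm_ne_zero_iff.1 (by rw [hξ]; exact one_ne_zero)
  have hscale {ι : Type} (f : ι → ℕ × ℕ) :
      ∑' i, t / 2 ^ (f i).1 = t * ∑' i, ((2 : ℝ) ^ (f i).1)⁻¹ := by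
    simp_rw [div_eq_mul_inv]
    exact tsum_mul_left
  rw [hscale, mul_comm c] at hsum
  obtain ⟨G₁, hG₁G, hmass, hdense⟩ :=
    exists_dense_subfamily_dyadicIco G hη hηc (le_of_mul_le_mul_left hsum ht.1)
  refine ⟨G₁, hG₁G, ?_, fun q hq ⟨p, hp, hpq⟩ => ?_⟩
  · rw [hscale, mul_comm η]
    exact mul_le_mul_of_nonneg_left hmass ht.1.le
  · have hiff (p : ℕ × ℕ) : p ∈ G ∧ dyadicArc ξ t p ⊆ dyadicArc ξ t q ↔
        p ∈ G ∧ dyadicIco p ⊆ dyadicIco q :=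
      and_congr_right fun hp => dyadicArc_subset_dyadicArc_iff hξ₀ ht (hvalid p hp) hq
    rw [dyadicArc_subset_dyadicArc_iff hξ₀ ht (hvalid p (hG₁G hp)) hq] at hpq
    rw [← (Equiv.subtypeEquivRight hiff).symm.tsum_eq, hscale, div_eq_mul_inv, mul_left_comm]
    exact mul_le_mul_of_nonneg_left (hdense q hq ⟨p, hp, hpq⟩) ht.1.le

/-- Lemma (Fernández–Nicolau): selecting a subcollection of disjoint dyadic
subarcs with large total length and local density. -/
theorem statement17 (ξ : ℂ) (hξ : ‖ξ‖ = 1) (t : ℝ) (ht : t ∈ Ioc (0 : ℝ) 1)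
    (η c : ℝ) (hη : 0 < η) (hηc : η < c) (hc : c < 1)
    (G : Set (ℕ × ℕ)) (hvalid : ∀ p ∈ G, p.2 < 2 ^ p.1)
    (hdisj : ∀ p ∈ G, ∀ q ∈ G, p ≠ q → Disjoint (dyadicArc ξ t p) (dyadicArc ξ t q))
    (hsum : c * t ≤ ∑' p : G, t / 2 ^ (p : ℕ × ℕ).1) :
    ∃ G₁ ⊆ G, (η * t ≤ ∑' p : G₁, t / 2 ^ (p : ℕ × ℕ).1) ∧
      ∀ q : ℕ × ℕ, q.2 < 2 ^ q.1 →
        (∃ p ∈ G₁, dyadicArc ξ t p ⊆ dyadicArc ξ t q) →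
        (c - η) * (t / 2 ^ q.1) ≤
          ∑' p : {p : ℕ × ℕ // p ∈ G ∧ dyadicArc ξ t p ⊆ dyadicArc ξ t q},
            t / 2 ^ (p : ℕ × ℕ).1 :=
  statement17_general ξ hξ t ht η c hη hηc G hvalid hsum

end
end

section
/- For every M > 0 there exists ρ = ρ(M) ∈ (0,1) such that: if f : 𝔻 → 𝔻 is analytic and sup{(1−|z|²)|f′(z)|/(1−|f(z)|²) : z ∈ 𝔻} ≥ ρ, then the image f(𝔻) contains a hyperbolic disc of hyperbolic radius M. -/
open MeasureTheory Complex Set Metric Filter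
open scoped ENNReal NNReal Topology

noncomputable section

/-!
Composing `f` with disc automorphisms we may assume `z₀ = f z₀ = 0`, and the hyperbolic
derivative at `z₀` becomes `|g'(0)|`. If `g` omits a value `w ≠ 0` of the disc, then `h = φ_w ∘ g`
is a nonvanishing self-map of the disc with `h(0) = -w`; writing `h = exp G` with `Re G < 0` and
applying Schwarz's lemma to the Cayley transform of `G` gives `|h'(0)| ≤ 2|h(0)| log(1/|h(0)|)`,
that is `|g'(0)| ≤ ψ(|w|) := 2|w| log(1/|w|) / (1 - |w|²)`. Since `ψ < 1` on `[0, 1)`, we get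
`ψ ≤ C < 1` on `[0, tanh M]`; so if the hyperbolic derivative exceeds `C` somewhere, `g` covers the
Euclidean disc of radius `tanh M`, which is the hyperbolic disc of radius `M` about `0`.
-/

open ComplexConjugate

def mobius (a z : ℂ) : ℂ := (z - a) / (1 - conj a * z)

section Mobius

variable {a z : ℂ}

lemma normSq_one_sub_conj_mul_sub_normSq_sub (a z : ℂ) :
    normSq (1 - conj a * z) - normSq (z - a) = (1 - normSq a) * (1 - normSq z) := by
  simp only [normSq_apply, sub_re, sub_im, mul_re, mul_im, one_re, one_im, conj_re, conj_im]
  ring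

lemma one_sub_conj_mul_ne_zero_s18 (ha : ‖a‖ < 1) (hz : ‖z‖ < 1) : 1 - conj a * z ≠ 0 := by
  refine sub_ne_zero.2 fun h => ?_
  have : ‖conj a * z‖ < 1 := by
    rw [norm_mul, RCLike.norm_conj]
    nlinarith [norm_nonneg a, norm_nonneg z]
  simp [← h] at this

lemma one_sub_conj_mul_self (a : ℂ) : 1 - conj a * a = ((1 - ‖a‖ ^ 2 : ℝ) : ℂ) := by
  rw [conj_mul']
  push_cast
  ring

lemma norm_mobius_lt_one (ha : ‖a‖ < 1) (hz : ‖z‖ < 1) : ‖mobius a z‖ < 1 := by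
  have hden := one_sub_conj_mul_ne_zero_s18 ha hz
  rw [mobius, norm_div, div_lt_one (norm_pos_iff.2 hden),
    ← sq_lt_sq₀ (norm_nonneg _) (norm_nonneg _), Complex.sq_norm, Complex.sq_norm, ← sub_pos,
    normSq_one_sub_conj_mul_sub_normSq_sub]
  have := Complex.sq_norm a ▸ pow_lt_one₀ (norm_nonneg a) ha two_ne_zero
  have := Complex.sq_norm z ▸ pow_lt_one₀ (norm_nonneg z) hz two_ne_zero
  nlinarith

lemma mapsTo_mobius (ha : ‖a‖ < 1) : MapsTo (mobius a) (ball 0 1) (ball 0 1) := fun _ hz =>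
  mem_ball_zero_iff.2 (norm_mobius_lt_one ha (mem_ball_zero_iff.1 hz))

@[simp] lemma mobius_self (a : ℂ) : mobius a a = 0 := by simp [mobius]

@[simp] lemma mobius_zero (a : ℂ) : mobius a 0 = -a := by simp [mobius]

lemma mobius_neg_mobius (ha : ‖a‖ < 1) (hz : ‖z‖ < 1) : mobius (-a) (mobius a z) = z := by
  have hden := one_sub_conj_mul_ne_zero_s18 ha hz
  have haa := one_sub_conj_mul_ne_zero_s18 ha ha
  have hnum : mobius a z - -a = z * (1 - conj a * a) / (1 - conj a * z) := by
    rw [mobius, eq_div_iff hden, sub_mul, div_mul_cancel₀ _ hden]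
    ring
  have hden' : 1 - conj (-a) * mobius a z = (1 - conj a * a) / (1 - conj a * z) := by
    rw [mobius, eq_div_iff hden, map_neg, sub_mul, mul_assoc, neg_mul, div_mul_cancel₀ _ hden]
    ring
  rw [mobius, hnum, hden', div_div_div_cancel_right₀ hden, mul_div_cancel_right₀ _ haa]

lemma injOn_mobius (ha : ‖a‖ < 1) : InjOn (mobius a) (ball 0 1) := by
  refine LeftInvOn.injOn (f₁' := mobius (-a)) fun z hz => ?_
  exact mobius_neg_mobius ha (mem_ball_zero_iff.1 hz)

lemma hasDerivAt_mobius (hden : 1 - conj a * z ≠ 0) :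
    HasDerivAt (mobius a) ((1 - conj a * a) / (1 - conj a * z) ^ 2) z := by
  refine (((hasDerivAt_id z).sub_const a).div
    (((hasDerivAt_id z).const_mul (conj a)).const_sub 1) hden).congr_deriv ?_
  simp only [id_eq, one_mul, mul_one, mul_neg, sub_neg_eq_add]
  ring

lemma differentiableOn_mobius (ha : ‖a‖ < 1) : DifferentiableOn ℂ (mobius a) (ball 0 1) :=
  fun _ hz => (hasDerivAt_mobius (one_sub_conj_mul_ne_zero_s18 ha
    (mem_ball_zero_iff.1 hz))).differentiableAt.differentiableWithinAt

end Mobius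

lemma exists_hasDerivAt_eqOn_exp {h : ℂ → ℂ} {c : ℂ} {R : ℝ}
    (hd : DifferentiableOn ℂ h (ball c R)) (hne : ∀ z ∈ ball c R, h z ≠ 0) :
    ∃ G : ℂ → ℂ, (∀ z ∈ ball c R, HasDerivAt G (deriv h z / h z) z) ∧
      EqOn (exp ∘ G) h (ball c R) := by
  obtain ⟨G, hGc, hG⟩ :=
    ((hd.deriv isOpen_ball).div hd hne).isExactOn_ball.with_val_at c (log (h c))
  refine ⟨G, hG, fun z hz => ?_⟩
  have hc : c ∈ ball c R := mem_ball_self (pos_of_mem_ball hz)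
  have hφ : ∀ w ∈ ball c R, HasDerivAt (fun w => h w * exp (-G w)) 0 w := fun w hw => by
    have hdh := (hd.differentiableAt (isOpen_ball.mem_nhds hw)).hasDerivAt
    refine (hdh.mul (hG w hw).neg.cexp).congr_deriv ?_
    simp only [Pi.neg_apply, Pi.div_apply]
    field_simp [hne w hw]
    ring
  have hconst := isOpen_ball.is_const_of_deriv_eq_zero (convex_ball c R).isPreconnected
    (fun w hw => (hφ w hw).differentiableAt.differentiableWithinAt)
    (fun w hw => (hφ w hw).deriv) hz hc
  rw [hGc, exp_neg, exp_neg, exp_log (hne c hc), mul_inv_cancel₀ (hne c hc),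
    mul_inv_eq_one₀ (exp_ne_zero _)] at hconst
  exact hconst.symm

section HalfPlane

variable {a ζ : ℂ}

lemma add_conj_ne_zero_of_re_neg (hζ : ζ.re < 0) (ha : a.re < 0) : ζ + conj a ≠ 0 := by
  intro h
  have := congrArg re h
  simp only [add_re, conj_re, zero_re] at this
  linarith

lemma norm_sub_div_add_conj_lt_one (hζ : ζ.re < 0) (ha : a.re < 0) :
    ‖(ζ - a) / (ζ + conj a)‖ < 1 := by
  have hden := add_conj_ne_zero_of_re_neg hζ ha
  have key : normSq (ζ + conj a) - normSq (ζ - a) = 4 * ζ.re * a.re := by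
    simp only [normSq_apply, add_re, add_im, sub_re, sub_im, conj_re, conj_im]
    ring
  rw [norm_div, div_lt_one (norm_pos_iff.2 hden), ← sq_lt_sq₀ (norm_nonneg _) (norm_nonneg _),
    Complex.sq_norm, Complex.sq_norm]
  nlinarith [mul_pos (neg_pos.2 hζ) (neg_pos.2 ha)]

lemma hasDerivAt_sub_div_add_conj (ha : a.re < 0) :
    HasDerivAt (fun ζ => (ζ - a) / (ζ + conj a)) (1 / (2 * a.re)) a := by
  have hden := add_conj_ne_zero_of_re_neg ha ha
  refine (((hasDerivAt_id a).sub_const a).div ((hasDerivAt_id a).add_const (conj a))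
    hden).congr_deriv ?_
  simp only [id, sub_self, zero_mul, sub_zero, one_mul]
  rw [sq, div_mul_cancel_left₀ hden, add_conj, one_div]
  norm_num

end HalfPlane

lemma norm_deriv_mul_le_of_re_neg {G : ℂ → ℂ} {c : ℂ} {R : ℝ}
    (hd : DifferentiableOn ℂ G (ball c R)) (hre : ∀ z ∈ ball c R, (G z).re < 0) (hR : 0 < R) :
    ‖deriv G c‖ * R ≤ -2 * (G c).re := by
  have hc : c ∈ ball c R := mem_ball_self hR
  set a := G c
  have ha : a.re < 0 := hre c hc
  set K := fun z => (G z - a) / (G z + conj a)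
  have hKd : DifferentiableOn ℂ K (ball c R) := fun z hz =>
    ((hd z hz).sub_const a).div ((hd z hz).add_const _)
      (add_conj_ne_zero_of_re_neg (hre z hz) ha)
  have hKmaps : MapsTo K (ball c R) (closedBall (K c) 1) := fun z hz => by
    simpa [K, a] using (norm_sub_div_add_conj_lt_one (hre z hz) ha).le
  have hK : HasDerivAt K (1 / (2 * a.re) * deriv G c) c :=
    (hasDerivAt_sub_div_add_conj ha).comp c
      (hd.differentiableAt (isOpen_ball.mem_nhds hc)).hasDerivAt
  have hschwarz := norm_deriv_le_div_of_mapsTo_ball hKd hKmaps hR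
  have hnorm : ‖(1 / (2 * a.re) : ℂ)‖ = 1 / (-2 * a.re) := by
    rw [norm_div, norm_one, ← ofReal_ofNat, ← ofReal_mul, norm_real,
      Real.norm_of_nonpos (by linarith)]
    ring
  rw [hK.deriv, norm_mul, hnorm, div_mul_eq_mul_div, one_mul,
    div_le_div_iff₀ (by linarith) hR] at hschwarz
  linarith

lemma norm_deriv_mul_le_of_ne_zero {h : ℂ → ℂ} {c : ℂ} {R : ℝ}
    (hd : DifferentiableOn ℂ h (ball c R)) (hmaps : MapsTo h (ball c R) (ball 0 1))
    (hne : ∀ z ∈ ball c R, h z ≠ 0) (hR : 0 < R) :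
    ‖deriv h c‖ * R ≤ 2 * ‖h c‖ * -Real.log ‖h c‖ := by
  have hc : c ∈ ball c R := mem_ball_self hR
  obtain ⟨G, hG, hexp⟩ := exists_hasDerivAt_eqOn_exp hd hne
  have hnorm : ∀ z ∈ ball c R, ‖h z‖ = Real.exp (G z).re := fun z hz => by
    rw [← hexp hz, Function.comp_apply, norm_exp]
  have hre : ∀ z ∈ ball c R, (G z).re < 0 := fun z hz => by
    rw [← Real.exp_lt_one_iff, ← hnorm z hz, ← mem_ball_zero_iff]
    exact hmaps hz
  have hGd : DifferentiableOn ℂ G (ball c R) := fun z hz =>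
    (hG z hz).differentiableAt.differentiableWithinAt
  have hbound := norm_deriv_mul_le_of_re_neg hGd hre hR
  rw [(hG c hc).deriv, norm_div, ← Real.log_exp (G c).re, ← hnorm c hc] at hbound
  have hpos : 0 < ‖h c‖ := norm_pos_iff.2 (hne c hc)
  rw [div_mul_eq_mul_div, div_le_iff₀ hpos] at hbound
  linarith

def omittedValueBound (s : ℝ) : ℝ := 2 * s * -Real.log s / (1 - s ^ 2)

lemma omittedValueBound_lt_one {s : ℝ} (hs0 : 0 ≤ s) (hs1 : s < 1) : omittedValueBound s < 1 := by
  rcases hs0.eq_or_lt with rfl | hs0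
  · simp [omittedValueBound]
  rw [omittedValueBound, div_lt_one (by nlinarith)]
  -- with `t = -log s` this is `t < sinh t`
  have hsinh := Real.self_lt_sinh_iff.2 (neg_pos.2 (Real.log_neg hs0 hs1))
  rw [Real.sinh_eq, neg_neg, Real.exp_log hs0, Real.exp_neg, Real.exp_log hs0] at hsinh
  have := mul_inv_cancel₀ hs0.ne'
  nlinarith

lemma exists_omittedValueBound_le {r : ℝ} (hr0 : 0 ≤ r) (hr1 : r < 1) :
    ∃ C ∈ Ico (0 : ℝ) 1, ∀ s ∈ Icc 0 r, omittedValueBound s ≤ C := by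
  have hcont : ContinuousOn omittedValueBound (Icc 0 r) := by
    refine ContinuousOn.div ?_ (by fun_prop) fun s hs => ?_
    · exact (Real.continuous_mul_log.const_mul (-2)).continuousOn.congr fun s _ => by ring
    · nlinarith [hs.1, hs.2]
  obtain ⟨s, hs, hmax⟩ := isCompact_Icc.exists_isMaxOn (nonempty_Icc.2 hr0) hcont
  refine ⟨omittedValueBound s, ⟨?_, omittedValueBound_lt_one hs.1 (hs.2.trans_lt hr1)⟩, hmax⟩
  simpa [omittedValueBound] using hmax (left_mem_Icc.2 hr0)

lemma norm_deriv_le_omittedValueBound {g : ℂ → ℂ} (hd : DifferentiableOn ℂ g (ball 0 1))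
    (hmaps : MapsTo g (ball 0 1) (ball 0 1)) (hg0 : g 0 = 0) {w : ℂ} (hw : w ∈ ball (0 : ℂ) 1)
    (hw' : w ∉ g '' ball 0 1) : ‖deriv g 0‖ ≤ omittedValueBound ‖w‖ := by
  have hw1 : ‖w‖ < 1 := mem_ball_zero_iff.1 hw
  have h0 : (0 : ℂ) ∈ ball (0 : ℂ) 1 := mem_ball_self one_pos
  have hw2 : 0 < 1 - ‖w‖ ^ 2 := by nlinarith [norm_nonneg w]
  have hne : ∀ z ∈ ball (0 : ℂ) 1, (mobius w ∘ g) z ≠ 0 := fun z hz h => by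
    rw [Function.comp_apply, mobius, div_eq_zero_iff, sub_eq_zero] at h
    exact h.elim (fun h => hw' ⟨z, hz, h⟩)
      (one_sub_conj_mul_ne_zero_s18 hw1 (mem_ball_zero_iff.1 (hmaps hz)))
  have hder : HasDerivAt (mobius w ∘ g) ((1 - ‖w‖ ^ 2 : ℝ) * deriv g 0) 0 := by
    have := (hasDerivAt_mobius (a := w) (z := g 0) (by simp [hg0])).comp 0
      (hd.differentiableAt (isOpen_ball.mem_nhds h0)).hasDerivAt
    simpa [hg0, one_sub_conj_mul_self] using this
  have hbound := norm_deriv_mul_le_of_ne_zero ((differentiableOn_mobius hw1).comp hd hmaps)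
    ((mapsTo_mobius hw1).comp hmaps) hne one_pos
  rw [hder.deriv, mul_one, norm_mul, norm_real, Real.norm_of_nonneg hw2.le,
    Function.comp_apply, hg0, mobius_zero, norm_neg] at hbound
  rw [omittedValueBound, le_div_iff₀ hw2]
  linarith

lemma ball_subset_image_of_omittedValueBound_le {g : ℂ → ℂ}
    (hd : DifferentiableOn ℂ g (ball 0 1)) (hmaps : MapsTo g (ball 0 1) (ball 0 1))
    (hg0 : g 0 = 0) {r C : ℝ} (hr : r ≤ 1)
    (hC : ∀ s ∈ Icc 0 r, omittedValueBound s ≤ C) (hgC : C < ‖deriv g 0‖) :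
    ball 0 r ⊆ g '' ball 0 1 := by
  intro w hw
  by_contra hw'
  have := norm_deriv_le_omittedValueBound hd hmaps hg0 (ball_subset_ball hr hw) hw'
  linarith [hC ‖w‖ ⟨norm_nonneg w, (mem_ball_zero_iff.1 hw).le⟩]

lemma norm_deriv_mobius_comp_comp_mobius {f : ℂ → ℂ} {z₀ : ℂ} (hz₀ : ‖z₀‖ < 1)
    (hfz₀ : ‖f z₀‖ < 1) (hf : DifferentiableAt ℂ f z₀) :
    ‖deriv (mobius (f z₀) ∘ f ∘ mobius (-z₀)) 0‖ = hypDeriv f z₀ := by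
  have h1 : HasDerivAt (mobius (-z₀)) ((1 - ‖z₀‖ ^ 2 : ℝ) : ℂ) 0 := by
    simpa [one_sub_conj_mul_self] using hasDerivAt_mobius (a := -z₀) (z := 0) (by simp)
  have h2 : HasDerivAt f (deriv f z₀) (mobius (-z₀) 0) := by
    simpa using hf.hasDerivAt
  have h3 : HasDerivAt (mobius (f z₀)) (((1 - ‖f z₀‖ ^ 2 : ℝ) : ℂ)⁻¹) (f (mobius (-z₀) 0)) := by
    rw [mobius_zero, neg_neg]
    refine (hasDerivAt_mobius (one_sub_conj_mul_ne_zero_s18 hfz₀ hfz₀)).congr_deriv ?_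
    rw [one_sub_conj_mul_self]
    field_simp
  have hz₀2 : 0 ≤ 1 - ‖z₀‖ ^ 2 := by nlinarith [norm_nonneg z₀]
  rw [(h3.comp 0 (h2.comp 0 h1)).deriv, hypDeriv, norm_mul, norm_mul, norm_inv, norm_real,
    norm_real, Real.norm_of_nonneg hz₀2, Real.norm_of_nonneg (by nlinarith [norm_nonneg (f z₀)])]
  field_simp

lemma hypDist_lt_iff_norm_mobius_lt_tanh {z a : ℂ} (hz : ‖z‖ < 1) (ha : ‖a‖ < 1) (M : ℝ) :
    hypDist z a < M ↔ ‖mobius a z‖ < Real.tanh M := by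
  have hs := norm_mobius_lt_one ha hz
  have hs' : ‖mobius a z‖ ∈ Ioo (-1 : ℝ) 1 := ⟨by linarith [norm_nonneg (mobius a z)], hs⟩
  have hdist : hypDist z a = Real.artanh ‖mobius a z‖ :=
    (Real.artanh_eq_half_log (Ioo_subset_Icc_self hs')).symm
  rw [hdist, ← Real.artanh_lt_artanh_iff hs' ⟨Real.neg_one_lt_tanh M, Real.tanh_lt_one M⟩,
    Real.artanh_tanh]

/-- Lemma: if the hyperbolic derivative is not small, the image contains a large
hyperbolic disc. -/
theorem statement18 (M : ℝ) (hM : 0 < M) :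
    ∃ ρ ∈ Ioo (0 : ℝ) 1, ∀ f : ℂ → ℂ,
      DifferentiableOn ℂ f (ball (0 : ℂ) 1) →
      (∀ z ∈ ball (0 : ℂ) 1, f z ∈ ball (0 : ℂ) 1) →
      (∀ D : ℝ, (∀ z ∈ ball (0 : ℂ) 1, hypDeriv f z ≤ D) → ρ ≤ D) →
      ∃ a ∈ ball (0 : ℂ) 1,
        {z ∈ ball (0 : ℂ) 1 | hypDist z a < M} ⊆ f '' ball (0 : ℂ) 1 := by
  have htanh : 0 ≤ Real.tanh M := by
    rw [Real.tanh_eq_sinh_div_cosh]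
    exact div_nonneg (Real.sinh_nonneg_iff.2 hM.le) (Real.cosh_pos M).le
  obtain ⟨C, ⟨hC0, hC1⟩, hC⟩ := exists_omittedValueBound_le htanh (Real.tanh_lt_one M)
  refine ⟨(1 + C) / 2, ⟨by linarith, by linarith⟩, fun f hfd hfm hsup => ?_⟩
  obtain ⟨z₀, hz₀, hCz₀⟩ : ∃ z₀ ∈ ball (0 : ℂ) 1, C < hypDeriv f z₀ := by
    by_contra! h
    linarith [hsup C h]
  replace hfm : MapsTo f (ball 0 1) (ball 0 1) := hfm
  have hz₀' : ‖-z₀‖ < 1 := by rwa [norm_neg, ← mem_ball_zero_iff]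
  have hfz₀ : ‖f z₀‖ < 1 := mem_ball_zero_iff.1 (hfm hz₀)
  have hgm : MapsTo (mobius (f z₀) ∘ f ∘ mobius (-z₀)) (ball 0 1) (ball 0 1) :=
    (mapsTo_mobius hfz₀).comp (hfm.comp (mapsTo_mobius hz₀'))
  have hgd : DifferentiableOn ℂ (mobius (f z₀) ∘ f ∘ mobius (-z₀)) (ball 0 1) :=
    (differentiableOn_mobius hfz₀).comp (hfd.comp (differentiableOn_mobius hz₀')
      (mapsTo_mobius hz₀')) (hfm.comp (mapsTo_mobius hz₀'))
  have hcover := ball_subset_image_of_omittedValueBound_le hgd hgm (by simp)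
    (Real.tanh_lt_one M).le hC (by
      rwa [norm_deriv_mobius_comp_comp_mobius (mem_ball_zero_iff.1 hz₀) hfz₀
        (hfd.differentiableAt (isOpen_ball.mem_nhds hz₀))])
  refine ⟨f z₀, hfm hz₀, fun z ⟨hz, hzM⟩ => ?_⟩
  rw [hypDist_lt_iff_norm_mobius_lt_tanh (mem_ball_zero_iff.1 hz) hfz₀] at hzM
  obtain ⟨u, hu, hgu⟩ := hcover (mem_ball_zero_iff.2 hzM)
  exact ⟨mobius (-z₀) u, mapsTo_mobius hz₀' hu,
    injOn_mobius hfz₀ (hfm (mapsTo_mobius hz₀' hu)) hz hgu⟩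
end
end
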